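/- arXiv:1508.05018 — 5 statements merged into one kernel-verified Lean document; each statement's English description precedes it below -/
import Mathlib

section
/- A group G is residually finite if and only if G admits a semi-conjugacy-separating family of finite-index subgroups. -/
/-- A family `σ` of subgroups of `G` is semi-conjugacy-separating. -/
def SemiConjSep {G : Type*} [Group G] (σ : Set (Subgroup G)) : Prop :=
  ∀ F : Finset G, ∃ H ∈ σ,
    (⋃ k : G, (fun x => k * x * k⁻¹) '' (H : Set G)) ∩ ↑F ⊆ {1}

/-! Normal subgroups are their own conjugates, and in a residually finite group finite
intersections of normal finite-index subgroups avoid any finite set of nontrivial elements, so the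
normal finite-index subgroups form a semi-conjugacy-separating family. Conversely, the family
applied to `F = {g}` gives a finite-index `H` with `g ∉ H`, and the normal core of `H` is a normal
finite-index subgroup missing `g`. -/

namespace Subgroup

variable {G : Type*} [Group G]

theorem subset_iUnion_conj_image (H : Subgroup G) :
    (H : Set G) ⊆ ⋃ k : G, (fun x => k * x * k⁻¹) '' (H : Set G) :=
  fun h hh => Set.mem_iUnion.mpr ⟨1, h, hh, by group⟩

theorem Normal.iUnion_conj_image_eq {H : Subgroup G} (hH : H.Normal) :
    ⋃ k : G, (fun x => k * x * k⁻¹) '' (H : Set G) = H := by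
  refine subset_antisymm ?_ H.subset_iUnion_conj_image
  simp only [Set.iUnion_subset_iff, Set.image_subset_iff]
  exact fun k h hh => hH.conj_mem h hh k

theorem exists_normal_finiteIndex_forall_notMem
    (hG : ∀ g : G, g ≠ 1 → ∃ N : Subgroup G, N.Normal ∧ N.FiniteIndex ∧ g ∉ N) (F : Finset G) :
    ∃ N : Subgroup G, N.Normal ∧ N.FiniteIndex ∧ ∀ g ∈ F, g ≠ 1 → g ∉ N := by
  classical
  induction F using Finset.induction_on with
  | empty => exact ⟨⊤, inferInstance, inferInstance, by simp⟩
  | insert a F _ ih =>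
    obtain ⟨N, hN, hNfi, hNF⟩ := ih
    by_cases ha : a = 1
    · exact ⟨N, hN, hNfi, by simpa [ha] using hNF⟩
    obtain ⟨M, hM, hMfi, haM⟩ := hG a ha
    refine ⟨N ⊓ M, inferInstance, inferInstance, ?_⟩
    simp only [Finset.mem_insert, forall_eq_or_imp, mem_inf, not_and_or]
    exact ⟨fun _ => .inr haM, fun g hg hg1 => .inl (hNF g hg hg1)⟩

end Subgroup

open Subgroup

theorem semiConjSep_setOf_finiteIndex_normal {G : Type*} [Group G]
    (hG : ∀ g : G, g ≠ 1 → ∃ N : Subgroup G, N.Normal ∧ N.FiniteIndex ∧ g ∉ N) :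
    SemiConjSep {H : Subgroup G | H.FiniteIndex ∧ H.Normal} := by
  intro F
  obtain ⟨N, hN, hNfi, hNF⟩ := exists_normal_finiteIndex_forall_notMem hG F
  refine ⟨N, ⟨hNfi, hN⟩, ?_⟩
  rw [hN.iUnion_conj_image_eq]
  rintro g ⟨hgN, hgF⟩
  by_contra hg1
  exact hNF g hgF hg1 hgN

theorem SemiConjSep.exists_notMem {G : Type*} [Group G] {σ : Set (Subgroup G)}
    (hσ : SemiConjSep σ) {g : G} (hg : g ≠ 1) : ∃ H ∈ σ, g ∉ H := by
  obtain ⟨H, hHσ, hH⟩ := hσ {g}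
  refine ⟨H, hHσ, fun hgH => hg ?_⟩
  exact hH ⟨H.subset_iUnion_conj_image hgH, Finset.mem_singleton_self g⟩

/-- a group is residually finite if and only if it admits a
semi-conjugacy-separating family of finite-index subgroups. -/
theorem residuallyFinite_iff_semiConjSep {G : Type*} [Group G] :
    (∀ g : G, g ≠ 1 → ∃ N : Subgroup G, N.Normal ∧ N.FiniteIndex ∧ g ∉ N) ↔
    (∃ σ : Set (Subgroup G), (∀ H ∈ σ, H.FiniteIndex) ∧ SemiConjSep σ) := by
  constructor
  · intro hG
    exact ⟨_, fun H hH => hH.1, semiConjSep_setOf_finiteIndex_normal hG⟩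
  · rintro ⟨σ, hσfi, hσ⟩ g hg
    obtain ⟨H, hHσ, hgH⟩ := hσ.exists_notMem hg
    have := hσfi H hHσ
    exact ⟨H.normalCore, H.normalCore_normal, inferInstance,
      fun hgc => hgH (H.normalCore_le hgc)⟩
end

section
/- Let X be a metric space with a group H acting properly by isometries, let Y = X/H with quotient map φ : X → Y, and equip Y with the quotient metric d_Y(φ(x), φ(x')) = inf_{h,h' ∈ H} d_X(hx, h'x'). Suppose x ∈ X and R > 0 are such that φ is injective on the closed ball B_{3R}(x). Then φ restricted to the closed ball B_R(x) is an isometry onto its image. -/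
/-!
If some `h • z` were strictly closer to `y` than `z` is, the triangle inequality would put
`h • z` in `B_{3R}(x)` together with `z`; as both have the same orbit, injectivity of the
quotient map there forces `h • z = z`. So `z` realises the infimum defining `d_Y`.
-/

open Metric

theorem dist_le_dist_smul_of_injOn_closedBall {X H : Type*} [PseudoMetricSpace X] [Group H]
    [MulAction H X] {x y z : X} {R : ℝ}
    (hinj : Set.InjOn (Quotient.mk (MulAction.orbitRel H X)) (closedBall x (3 * R)))
    (hy : y ∈ closedBall x R) (hz : z ∈ closedBall x R) (h : H) :
    dist y z ≤ dist y (h • z) := by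
  rw [mem_closedBall] at hy hz
  by_contra! hlt
  have hz₃ : z ∈ closedBall x (3 * R) := by
    rw [mem_closedBall]
    linarith [dist_nonneg (x := z) (y := x)]
  have hhz₃ : h • z ∈ closedBall x (3 * R) := by
    rw [mem_closedBall]
    calc dist (h • z) x ≤ dist y (h • z) + dist y x := dist_triangle_left _ _ _
      _ ≤ (dist y x + dist z x) + dist y x := by linarith [dist_triangle_right y z x]
      _ ≤ 3 * R := by linarith
  have hfix : h • z = z := hinj hhz₃ hz₃ (Quotient.sound (MulAction.mem_orbit z h))
  exact hlt.ne (by rw [hfix])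

theorem quotient_isometry_on_ball_general {X : Type*} [MetricSpace X] {H : Type*} [Group H]
    [MulAction H X]
    (dY : Quotient (MulAction.orbitRel H X) → Quotient (MulAction.orbitRel H X) → ℝ)
    (hdY : ∀ a b : X, dY (Quotient.mk (MulAction.orbitRel H X) a)
        (Quotient.mk (MulAction.orbitRel H X) b) = sInf {r : ℝ | ∃ h : H, dist a (h • b) = r})
    (x : X) (R : ℝ)
    (hinj : Set.InjOn (Quotient.mk (MulAction.orbitRel H X)) (Metric.closedBall x (3 * R))) :
    ∀ y ∈ Metric.closedBall x R, ∀ z ∈ Metric.closedBall x R,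
      dY (Quotient.mk (MulAction.orbitRel H X) y) (Quotient.mk (MulAction.orbitRel H X) z)
        = dist y z := by
  intro y hy z hz
  rw [hdY]
  refine IsLeast.csInf_eq ⟨⟨1, by rw [one_smul]⟩, ?_⟩
  rintro _ ⟨h, rfl⟩
  exact dist_le_dist_smul_of_injOn_closedBall hinj hy hz h

/-- if a group `H` acts properly by isometries on a metric space `X`, `Y = X/H`
carries the quotient metric, and the quotient map is injective on the closed ball
`B_{3R}(x)`, then the quotient map restricted to `B_R(x)` is an isometry onto its image. -/
theorem quotient_isometry_on_ball {X : Type*} [MetricSpace X] {H : Type*} [Group H]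
    [MulAction H X]
    (hiso : ∀ (h : H) (a b : X), dist (h • a) (h • b) = dist a b)
    (hproper : ∀ (a b : X) (r : ℝ), {h : H | dist a (h • b) ≤ r}.Finite)
    (dY : Quotient (MulAction.orbitRel H X) → Quotient (MulAction.orbitRel H X) → ℝ)
    (hdY : ∀ a b : X, dY (Quotient.mk (MulAction.orbitRel H X) a)
        (Quotient.mk (MulAction.orbitRel H X) b) = sInf {r : ℝ | ∃ h : H, dist a (h • b) = r})
    (x : X) (R : ℝ) (hR : 0 < R)
    (hinj : Set.InjOn (Quotient.mk (MulAction.orbitRel H X)) (Metric.closedBall x (3 * R))) :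
    ∀ y ∈ Metric.closedBall x R, ∀ z ∈ Metric.closedBall x R,
      dY (Quotient.mk (MulAction.orbitRel H X) y) (Quotient.mk (MulAction.orbitRel H X) z)
        = dist y z :=
  quotient_isometry_on_ball_general dY hdY x R hinj
end

section
/- Let 𝒳 = {(X_α, d_α)}_{α ∈ I} be a family of metric spaces. Then the uniform asymptotic dimension of 𝒳 equals the supremum, over all countable subsets J ⊆ I, of the uniform asymptotic dimension of the subfamily {(X_α, d_α)}_{α ∈ J}. -/
noncomputable section

open Set

/-- A cover is `S`-bounded if every member has diameter at most `S`. -/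
def IsCoverBounded {α : Type*} (d : α → α → ℝ) (S : ℝ) (𝒰 : Set (Set α)) : Prop :=
  ∀ U ∈ 𝒰, ∀ x ∈ U, ∀ y ∈ U, d x y ≤ S

/-- A cover has Lebesgue number at least `R` if every nonempty set of diameter at most `R`
is contained in some member of the cover. -/
def HasLebesgueNumber {α : Type*} (d : α → α → ℝ) (R : ℝ) (𝒰 : Set (Set α)) : Prop :=
  ∀ F : Set α, F.Nonempty → (∀ x ∈ F, ∀ y ∈ F, d x y ≤ R) → ∃ U ∈ 𝒰, F ⊆ U

/-- A cover has multiplicity at most `m`: any more than `m` distinct members have empty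
intersection. -/
def MultiplicityLE {α : Type*} (𝒰 : Set (Set α)) (m : ℕ) : Prop :=
  ∀ V : Finset (Set α), ↑V ⊆ 𝒰 → m < V.card → ⋂₀ (V : Set (Set α)) = ∅

/-- A family of metric spaces has asymptotic dimension at most `n` uniformly. -/
def FamAsdimLE {I : Type*} (X : I → Type*) (d : ∀ i, X i → X i → ℝ) (n : ℕ) : Prop :=
  ∀ R : ℝ, 0 < R → ∃ S : ℝ, 0 < S ∧ ∀ i, ∃ 𝒰 : Set (Set (X i)),
    ⋃₀ 𝒰 = Set.univ ∧ IsCoverBounded (d i) S 𝒰 ∧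
    HasLebesgueNumber (d i) R 𝒰 ∧ MultiplicityLE 𝒰 (n + 1)

/-- The (uniform) asymptotic dimension of a family of metric spaces, as an extended natural
number. -/
def famAsdim {I : Type*} (X : I → Type*) (d : ∀ i, X i → X i → ℝ) : ℕ∞ :=
  sInf ((fun n : ℕ => (n : ℕ∞)) '' {n : ℕ | FamAsdimLE X d n})

/-- The asymptotic dimension of a single metric space. -/
def spaceAsdim (X : Type*) (d : X → X → ℝ) : ℕ∞ :=
  famAsdim (fun _ : Unit => X) (fun _ => d)

/-!
If the family is not uniformly of asymptotic dimension `≤ n`, some scale `R` admits no uniform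
bound `S`: for every `k` some member `X (f k)` has no `R`-Lebesgue cover of multiplicity
`≤ n + 1` by sets of diameter `≤ k + 1`. The countable subfamily indexed by the range of `f`
then already fails to have asymptotic dimension `≤ n` uniformly.
-/

theorem IsCoverBounded.mono {α : Type*} {d : α → α → ℝ} {S S' : ℝ} {𝒰 : Set (Set α)}
    (h : IsCoverBounded d S 𝒰) (hS : S ≤ S') : IsCoverBounded d S' 𝒰 :=
  fun U hU x hx y hy => (h U hU x hx y hy).trans hS

namespace FamAsdimLE

variable {I : Type*} {X : I → Type*} {d : ∀ i, X i → X i → ℝ}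

theorem mono {m n : ℕ} (hm : FamAsdimLE X d m) (hmn : m ≤ n) : FamAsdimLE X d n := by
  intro R hR
  obtain ⟨S, hS, hcover⟩ := hm R hR
  refine ⟨S, hS, fun i => ?_⟩
  obtain ⟨𝒰, hunion, hbdd, hleb, hmult⟩ := hcover i
  exact ⟨𝒰, hunion, hbdd, hleb, fun V hV hcard => hmult V hV (by omega)⟩

theorem comp {J : Type*} (f : J → I) {n : ℕ} (h : FamAsdimLE X d n) :
    FamAsdimLE (fun j => X (f j)) (fun j => d (f j)) n := by
  intro R hR
  obtain ⟨S, hS, hcover⟩ := h R hR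
  exact ⟨S, hS, fun j => hcover (f j)⟩

theorem of_forall_countable {n : ℕ}
    (h : ∀ J : Set I, J.Countable → FamAsdimLE (fun j : J => X j) (fun j => d j) n) :
    FamAsdimLE X d n := by
  by_contra hn
  simp only [FamAsdimLE, not_forall, not_exists, not_and] at hn
  obtain ⟨R, hR, hfail⟩ := hn
  choose f hf using fun k : ℕ => hfail ((k : ℝ) + 1) (by positivity)
  obtain ⟨S, -, hcover⟩ := h (range f) (countable_range f) R hR
  obtain ⟨𝒰, hunion, hbdd, hleb, hmult⟩ := hcover ⟨f ⌈S⌉₊, mem_range_self _⟩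
  exact hf ⌈S⌉₊ 𝒰 hunion (hbdd.mono ((Nat.le_ceil S).trans (le_add_of_nonneg_right zero_le_one)))
    hleb hmult

end FamAsdimLE

section famAsdim

variable {I : Type*} {X : I → Type*} {d : ∀ i, X i → X i → ℝ}

theorem famAsdim_le_coe_iff {n : ℕ} : famAsdim X d ≤ n ↔ FamAsdimLE X d n := by
  refine ⟨fun h => ?_, fun h => sInf_le ⟨n, h, rfl⟩⟩
  have hne : ((fun n : ℕ => (n : ℕ∞)) '' {n : ℕ | FamAsdimLE X d n}).Nonempty := by
    by_contra hempty
    simp only [famAsdim, not_nonempty_iff_eq_empty.mp hempty, sInf_empty, top_le_iff] at h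
    exact ENat.natCast_ne_top n h
  obtain ⟨k, hk, hk_eq⟩ := csInf_mem hne
  rw [famAsdim, ← hk_eq] at h
  exact hk.mono (Nat.cast_le.mp h)

theorem famAsdim_comp_le {J : Type*} (f : J → I) :
    famAsdim (fun j => X (f j)) (fun j => d (f j)) ≤ famAsdim X d :=
  sInf_le_sInf (image_mono fun _ hn => FamAsdimLE.comp f hn)

theorem famAsdim_le_of_forall_countable {N : ℕ∞}
    (h : ∀ J : Set I, J.Countable → famAsdim (fun j : J => X j) (fun j => d j) ≤ N) :
    famAsdim X d ≤ N := by
  induction N using ENat.recTopCoe with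
  | top => exact le_top
  | coe n =>
    exact famAsdim_le_coe_iff.mpr
      (FamAsdimLE.of_forall_countable fun J hJ => famAsdim_le_coe_iff.mp (h J hJ))

end famAsdim

/-- the uniform asymptotic dimension of a family of metric spaces equals the
supremum of the uniform asymptotic dimensions of its countable subfamilies. -/
theorem famAsdim_eq_iSup_countable {I : Type*} (X : I → Type*)
    (d : ∀ i, X i → X i → ℝ) :
    famAsdim X d =
      ⨆ (J : Set I) (_ : J.Countable), famAsdim (fun j : J => X j) (fun j => d j) :=
  le_antisymm
    (famAsdim_le_of_forall_countable fun J hJ =>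
      le_iSup₂ (f := fun (J : Set I) (_ : J.Countable) =>
        famAsdim (fun j : J => X j) (fun j => d j)) J hJ)
    (iSup₂_le fun _ _ => famAsdim_comp_le Subtype.val)
end
end

section
/- Every countable locally finite group, equipped with any proper right-invariant metric, has asymptotic dimension 0. -/
noncomputable section

open Set

/-- `d` is a proper right-invariant metric on the group `G`. -/
structure IsPRIMetric (G : Type*) [Group G] (d : G → G → ℝ) : Prop where
  refl : ∀ g : G, d g g = 0
  pos : ∀ g h : G, g ≠ h → 0 < d g h
  symm : ∀ g h : G, d g h = d h g
  triangle : ∀ g h k : G, d g k ≤ d g h + d h k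
  right_inv : ∀ g h k : G, d (g * k) (h * k) = d g h
  proper : ∀ r : ℝ, {g : G | d 1 g ≤ r}.Finite

/-- The quotient (pseudo)metric induced by a map `f` on its codomain. -/
def pushDist {G K : Type*} (f : G → K) (d : G → G → ℝ) : K → K → ℝ :=
  fun a b => sInf {r : ℝ | ∃ x y : G, f x = a ∧ f y = b ∧ d x y = r}

/-- The quotient metric on the left coset space `G ⧸ H`. -/
def quotDist {G : Type*} [Group G] (d : G → G → ℝ) (H : Subgroup G) :
    (G ⧸ H) → (G ⧸ H) → ℝ :=
  pushDist (fun g : G => (g : G ⧸ H)) d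

/-! Given `R`, local finiteness makes the subgroup `H` generated by the finite ball
`{g | d 1 g ≤ R}` finite. Right invariance gives `d x y = d 1 (y * x⁻¹)`, so the right cosets of
`H` have diameter at most `max_{h ∈ H} d 1 h`, while points at distance `≤ R` lie in the same
coset. The cosets therefore form a uniformly bounded cover of multiplicity one with Lebesgue
number `R`. -/

namespace Setoid

variable {X : Type*} (r : Setoid X)

theorem multiplicityLE_classes_one : MultiplicityLE r.classes 1 := by
  intro V hV hcard
  obtain ⟨A, hA, B, hB, hAB⟩ := Finset.one_lt_card.mp hcard
  refine eq_empty_iff_forall_notMem.mpr fun x hx => hAB ?_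
  exact eq_of_mem_classes (hV hA) (hx A hA) (hV hB) (hx B hB)

theorem isCoverBounded_classes {d : X → X → ℝ} {S : ℝ} (h : ∀ x y, r x y → d x y ≤ S) :
    IsCoverBounded d S r.classes := by
  rintro _ ⟨z, rfl⟩ x hx y hy
  exact h x y (r.trans hx (r.symm hy))

theorem hasLebesgueNumber_classes {d : X → X → ℝ} {R : ℝ} (h : ∀ x y, d x y ≤ R → r x y) :
    HasLebesgueNumber d R r.classes := by
  rintro F ⟨z, hz⟩ hF
  exact ⟨_, r.mem_classes z, fun x hx => h x z (hF x hx z hz)⟩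

end Setoid

theorem spaceAsdim_eq_zero_of_forall_setoid {X : Type*} {d : X → X → ℝ}
    (h : ∀ R > 0, ∃ (r : Setoid X) (S : ℝ),
      (∀ x y, d x y ≤ R → r x y) ∧ ∀ x y, r x y → d x y ≤ S) :
    spaceAsdim X d = 0 := by
  refine le_antisymm (sInf_le ⟨0, fun R hR => ?_, rfl⟩) zero_le
  obtain ⟨r, S, hR, hS⟩ := h R hR
  refine ⟨max S 1, by positivity, fun _ => ⟨r.classes, r.sUnion_classes, ?_,
    r.hasLebesgueNumber_classes hR, r.multiplicityLE_classes_one⟩⟩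
  exact r.isCoverBounded_classes fun x y hxy => (hS x y hxy).trans (le_max_left S 1)

section RightInvariant

variable {G : Type*} [Group G] {d : G → G → ℝ}

theorem dist_eq_dist_one_mul_inv (hinv : ∀ g h k : G, d (g * k) (h * k) = d g h) (x y : G) :
    d x y = d 1 (y * x⁻¹) := by
  simpa using hinv 1 (y * x⁻¹) x

theorem rightRel_of_dist_le {R : ℝ} {H : Subgroup G}
    (hinv : ∀ g h k : G, d (g * k) (h * k) = d g h)
    (hball : {g | d 1 g ≤ R} ⊆ H) {x y : G} (hxy : d x y ≤ R) :
    QuotientGroup.rightRel H x y := by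
  rw [QuotientGroup.rightRel_apply]
  exact hball (show d 1 (y * x⁻¹) ≤ R by rwa [← dist_eq_dist_one_mul_inv hinv])

theorem exists_dist_le_of_rightRel {H : Subgroup G}
    (hinv : ∀ g h k : G, d (g * k) (h * k) = d g h)
    (hH : (H : Set G).Finite) :
    ∃ S, ∀ x y, QuotientGroup.rightRel H x y → d x y ≤ S := by
  obtain ⟨S, hS⟩ := (hH.image (d 1)).bddAbove
  refine ⟨S, fun x y hxy => ?_⟩
  rw [dist_eq_dist_one_mul_inv hinv]
  exact hS (mem_image_of_mem _ (QuotientGroup.rightRel_apply.mp hxy))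

end RightInvariant

theorem asdim_locally_finite_eq_zero_general {G : Type*} [Group G]
    (hLF : ∀ S : Finset G, ((Subgroup.closure (↑S : Set G) : Subgroup G) : Set G).Finite)
    (d : G → G → ℝ) (hd : IsPRIMetric G d) :
    spaceAsdim G d = 0 := by
  refine spaceAsdim_eq_zero_of_forall_setoid fun R _ => ?_
  let ball := (hd.proper R).toFinset
  let H := Subgroup.closure (ball : Set G)
  obtain ⟨S, hS⟩ := exists_dist_le_of_rightRel hd.right_inv (hLF ball)
  have hball : {g | d 1 g ≤ R} ⊆ H := fun g hg =>
    Subgroup.subset_closure ((hd.proper R).mem_toFinset.mpr hg)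
  exact ⟨QuotientGroup.rightRel H, S, fun x y => rightRel_of_dist_le hd.right_inv hball, hS⟩

/-- every countable locally finite group, with any proper right-invariant
metric, has asymptotic dimension 0. -/
theorem asdim_locally_finite_eq_zero {G : Type*} [Group G] [Countable G]
    (hLF : ∀ S : Finset G, ((Subgroup.closure (↑S : Set G) : Subgroup G) : Set G).Finite)
    (d : G → G → ℝ) (hd : IsPRIMetric G d) :
    spaceAsdim G d = 0 :=
  asdim_locally_finite_eq_zero_general hLF d hd
end
end

section
/- Let G be a residually finite group with a fixed proper right-invariant metric, and let σ be a semi-conjugacy-separating family of finite-index subgroups of G. Then asdim(G) ≤ asdim(□_σ G), where □_σ G is the box space of G with respect to σ. -/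
/-!
Take a cover of the quotients `G ⧸ H` by sets of diameter at most `S`, with Lebesgue number `R`
and multiplicity at most `n + 1`. Choose `H ∈ σ` whose conjugates miss the (finite) ball of
radius `2ρ` around `1`; then every left coset of `H` is `2ρ`-separated in `G`. Lift each member
`U` to the pieces of its preimage cut out by the `ρ`-balls around the points of one fixed coset
over `U`. For `ρ > S + R` these pieces cover `G`, have diameter at most `2ρ` and Lebesgue number
`R`, and pieces over the same `U` are disjoint, so the multiplicity does not grow.
-/

noncomputable section

open Set

theorem famAsdim_le_famAsdim {I J : Type*} {X : I → Type*} {Y : J → Type*}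
    {dX : ∀ i, X i → X i → ℝ} {dY : ∀ j, Y j → Y j → ℝ}
    (h : ∀ n, FamAsdimLE X dX n → FamAsdimLE Y dY n) : famAsdim Y dY ≤ famAsdim X dX :=
  sInf_le_sInf (image_mono h)

theorem MultiplicityLE.of_mapsTo {α β : Type*} {𝒰 : Set (Set α)} {𝒱 : Set (Set β)} {m : ℕ}
    (h𝒰 : MultiplicityLE 𝒰 m) (f : β → α) (φ : Set β → Set α) (hφ : ∀ V ∈ 𝒱, φ V ∈ 𝒰)
    (hmaps : ∀ V ∈ 𝒱, MapsTo f V (φ V)) (hinj : ∀ y, InjOn φ {V ∈ 𝒱 | y ∈ V}) :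
    MultiplicityLE 𝒱 m := by
  classical
  intro W hW hcard
  by_contra hne
  obtain ⟨y, hy⟩ := nonempty_iff_ne_empty.2 hne
  have hinjW : InjOn φ W := (hinj y).mono fun V hV => (⟨hW hV, hy V hV⟩ : V ∈ {V ∈ 𝒱 | y ∈ V})
  have hempty := h𝒰 (W.image φ) (by simpa [Set.subset_def] using fun V hV => hφ V (hW hV))
    (by rwa [Finset.card_image_of_injOn hinjW])
  have hfy : f y ∈ ⋂₀ (W.image φ : Set (Set α)) := by
    simpa using fun V hV => hmaps V (hW hV) (hy V hV)
  rw [hempty] at hfy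
  exact hfy

namespace IsPRIMetric

variable {G : Type*} [Group G] {d : G → G → ℝ}

theorem nonneg (hd : IsPRIMetric G d) (x y : G) : 0 ≤ d x y := by
  have h := hd.triangle x y x
  rw [hd.refl, hd.symm y x] at h
  linarith

theorem dist_eq_dist_mul_inv_one (hd : IsPRIMetric G d) (x y : G) : d x y = d (x * y⁻¹) 1 := by
  simpa using hd.right_inv (x * y⁻¹) 1 y

end IsPRIMetric

section QuotDist

variable {G : Type*} [Group G] {d : G → G → ℝ} {H : Subgroup G}

theorem quotDist_mk_le (hd : IsPRIMetric G d) (x y : G) :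
    quotDist d H (x : G ⧸ H) (y : G ⧸ H) ≤ d x y :=
  csInf_le ⟨0, fun _ ⟨a, b, _, _, hr⟩ => hr ▸ hd.nonneg a b⟩ ⟨x, y, rfl, rfl, rfl⟩

theorem exists_mk_eq_dist_lt_of_quotDist_lt (hd : IsPRIMetric G d) {x y : G} {r : ℝ}
    (hlt : quotDist d H (x : G ⧸ H) (y : G ⧸ H) < r) :
    ∃ x' : G, (x' : G ⧸ H) = x ∧ d x' y < r := by
  have hne : {r | ∃ a b : G, (a : G ⧸ H) = x ∧ (b : G ⧸ H) = y ∧ d a b = r}.Nonempty :=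
    ⟨d x y, x, y, rfl, rfl, rfl⟩
  obtain ⟨_, ⟨a, b, ha, hb, rfl⟩, hab⟩ := exists_lt_of_csInf_lt hne hlt
  obtain ⟨h, rfl⟩ : ∃ h : H, b = y * h := ⟨⟨y⁻¹ * b, QuotientGroup.eq.1 hb.symm⟩, by simp⟩
  -- Right-translating the pair `(a, y * h)` by `h⁻¹` keeps its distance and moves it over `y`.
  refine ⟨a * (h : G)⁻¹, by simpa [QuotientGroup.eq] using ha, ?_⟩
  simpa [hd.right_inv] using (hd.right_inv a (y * h) (h : G)⁻¹).trans_lt hab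

end QuotDist

theorem SemiConjSep.exists_cosets_separated {G : Type*} [Group G] {d : G → G → ℝ}
    {σ : Set (Subgroup G)} (hσ : SemiConjSep σ) (hd : IsPRIMetric G d) (r : ℝ) :
    ∃ H ∈ σ, ∀ x y : G, (x : G ⧸ H) = y → d x y ≤ r → x = y := by
  obtain ⟨H, hHσ, hsep⟩ := hσ (hd.proper r).toFinset
  refine ⟨H, hHσ, fun x y hxy hle => ?_⟩
  have hconj : x * (x⁻¹ * y)⁻¹ * x⁻¹ = x * y⁻¹ := by group
  have hmem : x * y⁻¹ ∈ ⋃ k : G, (fun g => k * g * k⁻¹) '' (H : Set G) :=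
    mem_iUnion.2 ⟨x, (x⁻¹ * y)⁻¹, H.inv_mem (QuotientGroup.eq.1 hxy), hconj⟩
  have hball : x * y⁻¹ ∈ ((hd.proper r).toFinset : Set G) := by
    simpa [hd.symm 1, ← hd.dist_eq_dist_mul_inv_one] using hle
  exact mul_inv_eq_one.1 (hsep ⟨hmem, hball⟩)

section LiftCover

variable {G : Type*} [Group G] {d : G → G → ℝ} {H : Subgroup G} {𝒰 : Set (Set (G ⧸ H))}
  {S R ρ : ℝ}

def liftCover (d : G → G → ℝ) (H : Subgroup G) (ρ : ℝ) (𝒰 : Set (Set (G ⧸ H))) :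
    Set (Set G) :=
  {V | ∃ U ∈ 𝒰, ∃ c : G, (c : G ⧸ H) = Classical.epsilon (· ∈ U) ∧
    V = QuotientGroup.mk ⁻¹' U ∩ {y | d c y ≤ ρ}}

theorem exists_center_dist_lt (hd : IsPRIMetric G d) (hbdd : IsCoverBounded (quotDist d H) S 𝒰)
    {U : Set (G ⧸ H)} (hU : U ∈ 𝒰) {g : G} (hg : (g : G ⧸ H) ∈ U) {s : ℝ} (hs : S < s) :
    ∃ c : G, (c : G ⧸ H) = Classical.epsilon (· ∈ U) ∧ d c g < s := by
  obtain ⟨c, hc⟩ := QuotientGroup.mk_surjective (Classical.epsilon (· ∈ U))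
  have hcU : (c : G ⧸ H) ∈ U := hc ▸ Classical.epsilon_spec ⟨_, hg⟩
  obtain ⟨c', hc', hlt⟩ :=
    exists_mk_eq_dist_lt_of_quotDist_lt hd ((hbdd U hU _ hcU _ hg).trans_lt hs)
  exact ⟨c', hc'.trans hc, hlt⟩

theorem sUnion_liftCover (hd : IsPRIMetric G d) (hcov : ⋃₀ 𝒰 = univ)
    (hbdd : IsCoverBounded (quotDist d H) S 𝒰) (hρ : S < ρ) : ⋃₀ liftCover d H ρ 𝒰 = univ := by
  refine eq_univ_of_forall fun g => ?_
  obtain ⟨U, hU, hg⟩ := mem_sUnion.1 (hcov.symm ▸ mem_univ (g : G ⧸ H))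
  obtain ⟨c, hc, hlt⟩ := exists_center_dist_lt hd hbdd hU hg hρ
  exact ⟨_, ⟨U, hU, c, hc, rfl⟩, hg, hlt.le⟩

theorem isCoverBounded_liftCover (hd : IsPRIMetric G d) :
    IsCoverBounded d (2 * ρ) (liftCover d H ρ 𝒰) := by
  rintro _ ⟨U, -, c, -, rfl⟩ x ⟨-, hx⟩ y ⟨-, hy⟩
  have := hd.triangle x c y
  rw [hd.symm x c] at this
  simp only [mem_ofPred_eq] at hx hy
  linarith

theorem hasLebesgueNumber_liftCover (hd : IsPRIMetric G d)
    (hbdd : IsCoverBounded (quotDist d H) S 𝒰) (hleb : HasLebesgueNumber (quotDist d H) R 𝒰)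
    (hρ : S + R < ρ) : HasLebesgueNumber d R (liftCover d H ρ 𝒰) := by
  rintro F ⟨y₀, hy₀⟩ hF
  obtain ⟨U, hU, hFU⟩ := hleb ((↑) '' F) ⟨_, y₀, hy₀, rfl⟩ <| by
    rintro _ ⟨x, hx, rfl⟩ _ ⟨y, hy, rfl⟩
    exact (quotDist_mk_le hd x y).trans (hF x hx y hy)
  obtain ⟨c, hc, hlt⟩ := exists_center_dist_lt hd hbdd hU (hFU ⟨y₀, hy₀, rfl⟩) (s := ρ - R)
    (by linarith)
  refine ⟨_, ⟨U, hU, c, hc, rfl⟩, fun y hy => ⟨hFU ⟨y, hy, rfl⟩, ?_⟩⟩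
  have := hd.triangle c y₀ y
  have := hF y₀ hy₀ y hy
  simp only [mem_ofPred_eq]
  linarith

theorem multiplicityLE_liftCover (hd : IsPRIMetric G d)
    (hsep : ∀ x y : G, (x : G ⧸ H) = y → d x y ≤ 2 * ρ → x = y) {m : ℕ}
    (hmul : MultiplicityLE 𝒰 m) : MultiplicityLE (liftCover d H ρ 𝒰) m := by
  choose! φ hφ c hc hV using fun V (hV : V ∈ liftCover d H ρ 𝒰) => hV
  refine hmul.of_mapsTo QuotientGroup.mk φ hφ (fun V hV' => ?_) fun y V₁ hV₁ V₂ hV₂ hφV => ?_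
  · intro y hy
    rw [hV V hV'] at hy
    exact hy.1
  · obtain ⟨h₁, hy₁⟩ := hV₁
    obtain ⟨h₂, hy₂⟩ := hV₂
    rw [hV V₁ h₁] at hy₁ ⊢
    rw [hV V₂ h₂] at hy₂ ⊢
    have hcc : c V₁ = c V₂ := by
      refine hsep _ _ (by rw [hc V₁ h₁, hc V₂ h₂, hφV]) ?_
      have hy₁ : d (c V₁) y ≤ ρ := hy₁.2
      have hy₂ : d (c V₂) y ≤ ρ := hy₂.2
      have := hd.triangle (c V₁) y (c V₂)
      rw [hd.symm y] at this
      linarith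
    rw [hφV, hcc]

end LiftCover

theorem asdim_le_asdim_box_general {G : Type*} [Group G]
    (d : G → G → ℝ) (hd : IsPRIMetric G d)
    (σ : Set (Subgroup G)) (hσ : SemiConjSep σ) :
    spaceAsdim G d ≤
      famAsdim (fun H : σ => G ⧸ (H : Subgroup G))
        (fun H => quotDist d (H : Subgroup G)) := by
  refine famAsdim_le_famAsdim fun n hn R hR => ?_
  obtain ⟨S, hS, hcov⟩ := hn R hR
  obtain ⟨H, hHσ, hsep⟩ := hσ.exists_cosets_separated hd (2 * (S + R + 1))
  obtain ⟨𝒰, hunion, hbdd, hleb, hmul⟩ := hcov ⟨H, hHσ⟩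
  exact ⟨2 * (S + R + 1), by positivity, fun _ => ⟨liftCover d H (S + R + 1) 𝒰,
    sUnion_liftCover hd hunion hbdd (by linarith), isCoverBounded_liftCover hd,
    hasLebesgueNumber_liftCover hd hbdd hleb (by linarith), multiplicityLE_liftCover hd hsep hmul⟩⟩

/-- for a residually finite group `G` with a proper right-invariant metric
and a semi-conjugacy-separating family `σ` of finite-index subgroups, the asymptotic
dimension of `G` is at most that of the box space `□_σ G` (equivalently, of the box family
of finite quotients `G ⧸ H`, `H ∈ σ`, with their quotient metrics). -/
theorem asdim_le_asdim_box {G : Type*} [Group G]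
    (d : G → G → ℝ) (hd : IsPRIMetric G d)
    (hRF : ∀ g : G, g ≠ 1 → ∃ N : Subgroup G, N.Normal ∧ N.FiniteIndex ∧ g ∉ N)
    (σ : Set (Subgroup G)) (hfi : ∀ H ∈ σ, H.FiniteIndex) (hσ : SemiConjSep σ) :
    spaceAsdim G d ≤
      famAsdim (fun H : σ => G ⧸ (H : Subgroup G))
        (fun H => quotDist d (H : Subgroup G)) :=
  asdim_le_asdim_box_general d hd σ hσ
end
end
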